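/- Let 0<q<1 be real, h1,h2,l1,l2,α1,α2,β real, t1,t2 nonzero complex, and let (i,i') = (1,2) or (2,1). Suppose β = ε·(−h1−h2+l1+l2+α_i−α_{i'}+2) for some ε ∈ {1,−1}, and set E0 = −(q^{α_i+l1+1/2}t1 + q^{α_i+l2+1/2}t2 + q^{α_{i'}+h1−1/2}t1 + q^{α_{i'}+h2−1/2}t2). Then: (a) the function F1(x) = x^{−α_i}·(q^{h1+1/2}t1/x;q)_∞(q^{h2+1/2}t2/x;q)_∞ / ((q^{l1+1/2}t1/x;q)_∞(q^{l2+1/2}t2/x;q)_∞) satisfies (A⟨4⟩(x; h1,h2,l1,l2,α1,α2,β)F1)(x) = E0·F1(x) for every nonzero x with x ∉ {q^{l1+n−1/2}t1 : n ∈ ℤ} ∪ {q^{l2+n−1/2}t2 : n ∈ ℤ}; (b) the function F2(x) = x^{−α_i+h1+h2−l1−l2}·(x/(q^{l1−1/2}t1);q)_∞(x/(q^{l2−1/2}t2);q)_∞ / ((x/(q^{h1−1/2}t1);q)_∞(x/(q^{h2−1/2}t2);q)_∞) satisfies (A⟨4⟩(x; h1,h2,l1,l2,α1,α2,β)F2)(x)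 = E0·F2(x) for every nonzero x with x ∉ {q^{h1+n−1/2}t1 : n ∈ ℤ} ∪ {q^{h2+n−1/2}t2 : n ∈ ℤ}. -/

import Mathlib

open Filter Topology

/-- The infinite q-Pochhammer symbol `(a;q)_∞ = ∏_{j=0}^∞ (1 - q^j a)`. -/
noncomputable def qPochInf (q : ℝ) (a : ℂ) : ℂ := ∏' j : ℕ, (1 - (q : ℂ) ^ j * a)

/-- `q^r` for a real exponent `r`, using the principal branch of the complex power. -/
noncomputable def qpow (q : ℝ) (r : ℝ) : ℂ := (q : ℂ) ^ (r : ℂ)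

/-- The fourth degenerate Ruijsenaars–van Diejen operator `A⟨4⟩` applied to `g` at `x`. -/
noncomputable def A4 (q : ℝ) (t1 t2 : ℂ) (h1 h2 l1 l2 a1 a2 b : ℝ) (g : ℂ → ℂ) (x : ℂ) : ℂ :=
  x⁻¹ * (x - qpow q (h1 + 1/2) * t1) * (x - qpow q (h2 + 1/2) * t2) * g (x / (q : ℂ))
    + qpow q (a1 + a2) * x⁻¹ * (x - qpow q (l1 - 1/2) * t1) * (x - qpow q (l2 - 1/2) * t2) *
        g ((q : ℂ) * x)
    - ((qpow q a1 + qpow q a2) * x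
        + qpow q ((h1 + h2 + l1 + l2 + a1 + a2) / 2) * (qpow q (b / 2) + qpow q (-(b / 2))) *
            t1 * t2 * x⁻¹) * g x


section RvD4Aux

set_option maxHeartbeats 2000000

variable {q : ℝ}

lemma qsummable_log (hq0 : 0 < q) (hq1 : q < 1) (a : ℂ) :
    Summable (fun j : ℕ => Complex.log (1 - (q:ℂ)^j * a)) := by
  have hnorm : ∀ j : ℕ, ‖(q:ℂ)^j * a‖ = q^j * ‖a‖ := by
    intro j
    rw [norm_mul, norm_pow, Complex.norm_real, Real.norm_eq_abs, abs_of_pos hq0]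
  have htend : Tendsto (fun j : ℕ => q^j * ‖a‖) atTop (nhds 0) := by
    simpa using (tendsto_pow_atTop_nhds_zero_of_lt_one hq0.le hq1).mul_const ‖a‖
  apply Summable.of_norm_bounded_eventually (g := fun j : ℕ => 3/2 * (q^j * ‖a‖))
  · exact (((summable_geometric_of_lt_one hq0.le hq1).mul_right ‖a‖).mul_left (3/2))
  · rw [Nat.cofinite_eq_atTop]
    filter_upwards [htend.eventually_le_const (by norm_num : (0:ℝ) < 1/2)] with j hj
    calc ‖Complex.log (1 - (q:ℂ)^j * a)‖
        = ‖Complex.log (1 + (-((q:ℂ)^j * a)))‖ := by ring_nf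
      _ ≤ 3/2 * ‖-((q:ℂ)^j * a)‖ := Complex.norm_log_one_add_half_le_self (by
            rw [norm_neg, hnorm]; exact hj)
      _ = 3/2 * (q^j * ‖a‖) := by rw [norm_neg, hnorm]

lemma qmultipliable (hq0 : 0 < q) (hq1 : q < 1) (a : ℂ) :
    Multipliable (fun j : ℕ => 1 - (q:ℂ)^j * a) := by
  by_cases hz : ∀ j : ℕ, 1 - (q:ℂ)^j * a ≠ 0
  · exact Complex.multipliable_of_summable_log (qsummable_log hq0 hq1 a)
  · push_neg at hz
    obtain ⟨j0, hj0⟩ := hz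
    refine ⟨0, ?_⟩
    rw [HasProd]
    apply Tendsto.congr' _ tendsto_const_nhds
    filter_upwards [Filter.eventually_ge_atTop {j0}] with s hs
    exact (Finset.prod_eq_zero (hs (Finset.mem_singleton_self j0)) hj0).symm

lemma qPochInf_ne_zero (hq0 : 0 < q) (hq1 : q < 1) (a : ℂ)
    (h : ∀ j : ℕ, 1 - (q:ℂ)^j * a ≠ 0) : qPochInf q a ≠ 0 := by
  have hs := (qsummable_log hq0 hq1 a).hasSum.cexp
  have hfun : (fun n : ℕ => Complex.exp (Complex.log (1 - (q:ℂ)^n * a)))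
      = fun n : ℕ => 1 - (q:ℂ)^n * a := funext fun n => Complex.exp_log (h n)
  simp only [Function.comp_def] at hs
  rw [hfun] at hs
  rw [qPochInf, hs.tprod_eq]
  exact Complex.exp_ne_zero _

lemma qPochInf_shift (hq0 : 0 < q) (hq1 : q < 1) (a : ℂ) :
    qPochInf q a = (1 - a) * qPochInf q ((q:ℂ) * a) := by
  have hm : Multipliable (fun n : ℕ => 1 - (q:ℂ)^(n+1) * a) :=
    (qmultipliable hq0 hq1 ((q:ℂ) * a)).congr (fun b => by rw [pow_succ]; ring)
  rw [qPochInf, tprod_eq_zero_mul' hm]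
  simp only [pow_zero, one_mul, qPochInf]
  congr 1
  exact tprod_congr (fun b => by rw [pow_succ]; ring)

lemma qpow_def (hq0 : 0 < q) (r : ℝ) : qpow q r = ((q ^ r : ℝ) : ℂ) := by
  rw [qpow, Complex.ofReal_cpow hq0.le]

lemma qpow_ne_zero (hq0 : 0 < q) (r : ℝ) : qpow q r ≠ 0 := by
  rw [qpow_def hq0]
  exact_mod_cast (Real.rpow_pos_of_pos hq0 r).ne'

lemma qpow_add (hq0 : 0 < q) (r s : ℝ) : qpow q (r + s) = qpow q r * qpow q s := by
  rw [qpow, qpow, qpow, Complex.ofReal_add, Complex.cpow_add _ _ (by exact_mod_cast hq0.ne')]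

lemma qpow_one : qpow q 1 = (q:ℂ) := by simp [qpow]

lemma qpow_neg (hq0 : 0 < q) (r : ℝ) : qpow q (-r) = (qpow q r)⁻¹ := by
  rw [qpow_def hq0, qpow_def hq0, Real.rpow_neg hq0.le]
  push_cast
  rfl

lemma qpow_neg_one (hq0 : 0 < q) : qpow q (-1 : ℝ) = ((q:ℂ))⁻¹ := by
  rw [qpow_neg hq0, qpow_one]

lemma qpow_natCast (j : ℕ) : qpow q (j:ℝ) = (q:ℂ)^j := by
  rw [qpow, show ((j:ℝ):ℂ) = (j:ℂ) by push_cast; rfl, Complex.cpow_natCast]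

lemma cpow_real_mul {r : ℝ} (hr : 0 < r) {x : ℂ} (hx : x ≠ 0) (c : ℂ) :
    ((r:ℂ) * x) ^ c = (r:ℂ) ^ c * x ^ c := by
  have hr' : (r:ℂ) ≠ 0 := by exact_mod_cast hr.ne'
  rw [Complex.cpow_def_of_ne_zero (mul_ne_zero hr' hx),
    Complex.cpow_def_of_ne_zero hr', Complex.cpow_def_of_ne_zero hx,
    Complex.log_ofReal_mul hr hx, add_mul, Complex.exp_add, ← Complex.ofReal_log hr.le]

lemma cpow_q_mul (hq0 : 0 < q) {x : ℂ} (hx : x ≠ 0) (s : ℝ) :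
    ((q:ℂ) * x) ^ ((s:ℝ):ℂ) = qpow q s * x ^ ((s:ℝ):ℂ) := by
  rw [cpow_real_mul hq0 hx, qpow]

lemma cpow_div_q (hq0 : 0 < q) {x : ℂ} (hx : x ≠ 0) (s : ℝ) :
    (x / (q:ℂ)) ^ ((s:ℝ):ℂ) = x ^ ((s:ℝ):ℂ) * (qpow q s)⁻¹ := by
  have hq' : (q:ℂ) ≠ 0 := by exact_mod_cast hq0.ne'
  have h := cpow_q_mul hq0 (x := x / (q:ℂ)) (div_ne_zero hx hq') s
  rw [mul_div_cancel₀ _ hq'] at h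
  rw [h]
  field_simp [qpow_ne_zero hq0]

lemma one_sub_ne_a (hq0 : 0 < q) {x t : ℂ} (hx : x ≠ 0) {l r : ℝ}
    (hL : ∀ n : ℤ, x ≠ qpow q (l + n - 1/2) * t) (m : ℤ) (hr : r = l + m - 1/2) :
    (1:ℂ) - qpow q r * t / x ≠ 0 := by
  subst hr
  intro h
  rw [sub_eq_zero] at h
  exact hL m (((div_eq_one_iff_eq hx).mp h.symm).symm)

lemma one_sub_ne_b (hq0 : 0 < q) {x t : ℂ} (ht : t ≠ 0) {l r : ℝ}
    (hL : ∀ n : ℤ, x ≠ qpow q (l + n - 1/2) * t) (m : ℤ) (hr : r = l + m - 1/2) :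
    (1:ℂ) - x / (qpow q r * t) ≠ 0 := by
  subst hr
  intro h
  rw [sub_eq_zero] at h
  exact hL m ((div_eq_one_iff_eq (mul_ne_zero (qpow_ne_zero hq0 _) ht)).mp h.symm)

lemma one_sub_ne_a' (hq0 : 0 < q) {x t : ℂ} (hx : x ≠ 0) {l r : ℝ}
    (hL : ∀ n : ℤ, x ≠ qpow q (l + n - 1/2) * t) (hr : r = l + 1/2) :
    (1:ℂ) - qpow q r * t / x / (q:ℂ) ≠ 0 := by
  have h : qpow q r * t / x / (q:ℂ) = qpow q (l + ((0:ℤ):ℝ) - 1/2) * t / x := by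
    rw [show (l + ((0:ℤ):ℝ) - 1/2 : ℝ) = r + (-1) by rw [hr]; push_cast; ring,
      qpow_add hq0, qpow_neg_one hq0]
    ring
  rw [h]
  exact one_sub_ne_a hq0 hx hL 0 rfl

lemma one_sub_ne_b' (hq0 : 0 < q) {x t : ℂ} (ht : t ≠ 0) {l r : ℝ}
    (hL : ∀ n : ℤ, x ≠ qpow q (l + n - 1/2) * t) (hr : r = l - 1/2) :
    (1:ℂ) - x / (qpow q r * t) / (q:ℂ) ≠ 0 := by
  have h : x / (qpow q r * t) / (q:ℂ) = x / (qpow q (l + ((1:ℤ):ℝ) - 1/2) * t) := by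
    rw [div_div, show (l + ((1:ℤ):ℝ) - 1/2 : ℝ) = r + 1 by rw [hr]; push_cast; ring,
      qpow_add hq0, qpow_one]
    ring_nf
  rw [h]
  exact one_sub_ne_b hq0 ht hL 1 rfl

lemma pochA_ne (hq0 : 0 < q) (hq1 : q < 1) {x t : ℂ} (hx : x ≠ 0) {l r : ℝ}
    (hL : ∀ n : ℤ, x ≠ qpow q (l + n - 1/2) * t) (hr : r = l + 1/2) :
    qPochInf q ((q:ℂ) * (qpow q r * t / x)) ≠ 0 := by
  apply qPochInf_ne_zero hq0 hq1
  intro j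
  have he : (j:ℝ) + (1 + r) = l + ((j:ℤ)+2 : ℤ) - 1/2 := by subst hr; push_cast; ring
  have harg : (q:ℂ)^j * ((q:ℂ) * (qpow q r * t / x))
      = qpow q (l + ((j:ℤ)+2 : ℤ) - 1/2) * t / x := by
    rw [← qpow_natCast j, ← qpow_one (q := q), ← he, qpow_add hq0, qpow_add hq0]
    ring
  rw [harg]
  exact one_sub_ne_a hq0 hx hL ((j:ℤ)+2) rfl

lemma pochB_ne (hq0 : 0 < q) (hq1 : q < 1) {x t : ℂ} (ht : t ≠ 0) {l r : ℝ}
    (hL : ∀ n : ℤ, x ≠ qpow q (l + n - 1/2) * t) (hr : r = l - 1/2) :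
    qPochInf q ((q:ℂ) * (x / (qpow q r * t))) ≠ 0 := by
  apply qPochInf_ne_zero hq0 hq1
  intro j
  have he : (l + ((-(j:ℤ)-1 : ℤ)) - 1/2 : ℝ) + ((j:ℝ) + 1) = r := by subst hr; push_cast; ring
  have hkey : qpow q (l + ((-(j:ℤ)-1 : ℤ)) - 1/2) * ((q:ℂ)^j * (q:ℂ)) = qpow q r := by
    rw [← qpow_natCast j, ← qpow_one (q := q), ← he, qpow_add hq0, qpow_add hq0]
  have harg : (q:ℂ)^j * ((q:ℂ) * (x / (qpow q r * t)))
      = x / (qpow q (l + ((-(j:ℤ)-1 : ℤ)) - 1/2) * t) := by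
    rw [mul_div_assoc', mul_div_assoc',
      div_eq_div_iff (mul_ne_zero (qpow_ne_zero hq0 _) ht)
        (mul_ne_zero (qpow_ne_zero hq0 _) ht)]
    linear_combination x * t * hkey
  rw [harg]
  exact one_sub_ne_b hq0 ht hL ((-(j:ℤ)-1)) rfl

lemma poch_div_q' (hq0 : 0 < q) (hq1 : q < 1) (v : ℂ) :
    qPochInf q (v / (q:ℂ)) = (1 - v / (q:ℂ)) * ((1 - v) * qPochInf q ((q:ℂ) * v)) := by
  have hq' : (q:ℂ) ≠ 0 := by exact_mod_cast hq0.ne'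
  rw [qPochInf_shift hq0 hq1 (v / (q:ℂ)), mul_comm ((q:ℂ)), div_mul_cancel₀ _ hq',
    qPochInf_shift hq0 hq1 v]

lemma poch_div_a (hq0 : 0 < q) {x : ℂ} (hx : x ≠ 0) (u : ℂ) :
    qPochInf q (u / (x / (q:ℂ))) = qPochInf q ((q:ℂ) * (u / x)) := by
  congr 1
  rw [div_div_eq_mul_div, mul_comm u, mul_div_assoc]

lemma poch_mul_a (hq0 : 0 < q) (hq1 : q < 1) (x u : ℂ) :
    qPochInf q (u / ((q:ℂ) * x))
      = (1 - u / x / (q:ℂ)) * ((1 - u / x) * qPochInf q ((q:ℂ) * (u / x))) := by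
  rw [show u / ((q:ℂ) * x) = (u / x) / (q:ℂ) by rw [mul_comm ((q:ℂ)) x, ← div_div],
    poch_div_q' hq0 hq1]

lemma poch_div_b (hq0 : 0 < q) (hq1 : q < 1) (x u : ℂ) :
    qPochInf q (x / (q:ℂ) / u)
      = (1 - x / u / (q:ℂ)) * ((1 - x / u) * qPochInf q ((q:ℂ) * (x / u))) := by
  rw [div_right_comm, poch_div_q' hq0 hq1]

lemma poch_mul_b (x u : ℂ) :
    qPochInf q ((q:ℂ) * x / u) = qPochInf q ((q:ℂ) * (x / u)) := by
  rw [mul_div_assoc]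

end RvD4Aux



lemma absA (x Qc QI QI' QA QB QC QD t1 t2 X PA PB PC PD : ℂ)
    (hx : x ≠ 0) (hQc : Qc ≠ 0) (hQI : QI ≠ 0) (hPC : PC ≠ 0) (hPD : PD ≠ 0)
    (hwC : x - QC*t1 ≠ 0) (hvC : Qc*x - QC*t1 ≠ 0)
    (hwD : x - QD*t2 ≠ 0) (hvD : Qc*x - QD*t2 ≠ 0) :
    x⁻¹ * (x - QA * t1) * (x - QB * t2) * (X * QI * (PA * PB / (PC * PD))) +
        QI * QI' * x⁻¹ * (x - QC * Qc⁻¹ * t1) * (x - QD * Qc⁻¹ * t2) *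
          (QI⁻¹ * X *
            ((1 - QA * t1 / x / Qc) * ((1 - QA * t1 / x) * PA) * ((1 - QB * t2 / x / Qc) * ((1 - QB * t2 / x) * PB)) /
              ((1 - QC * t1 / x / Qc) * ((1 - QC * t1 / x) * PC) *
                ((1 - QD * t2 / x / Qc) * ((1 - QD * t2 / x) * PD))))) -
      ((QI + QI') * x + (QI * (QC * QD) + QI' * (QA * QB) * (Qc⁻¹ * Qc⁻¹)) * t1 * t2 * x⁻¹) *
        (X *
          ((1 - QA * t1 / x) * PA * ((1 - QB * t2 / x) * PB) / ((1 - QC * t1 / x) * PC * ((1 - QD * t2 / x) * PD)))) =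
    -(QI * QC * t1 + QI * QD * t2 + QI' * QA * Qc⁻¹ * t1 + QI' * QB * Qc⁻¹ * t2) *
      (X * ((1 - QA * t1 / x) * PA * ((1 - QB * t2 / x) * PB) / ((1 - QC * t1 / x) * PC * ((1 - QD * t2 / x) * PD)))) := by
  have eA1 : (1:ℂ) - QA * t1 / x = (x - QA*t1)/x := by field_simp
  have eB1 : (1:ℂ) - QB * t2 / x = (x - QB*t2)/x := by field_simp
  have eC1 : (1:ℂ) - QC * t1 / x = (x - QC*t1)/x := by field_simp
  have eD1 : (1:ℂ) - QD * t2 / x = (x - QD*t2)/x := by field_simp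
  have eA2 : (1:ℂ) - QA * t1 / x / Qc = (Qc*x - QA*t1)/(Qc*x) := by field_simp
  have eB2 : (1:ℂ) - QB * t2 / x / Qc = (Qc*x - QB*t2)/(Qc*x) := by field_simp
  have eC2 : (1:ℂ) - QC * t1 / x / Qc = (Qc*x - QC*t1)/(Qc*x) := by field_simp
  have eD2 : (1:ℂ) - QD * t2 / x / Qc = (Qc*x - QD*t2)/(Qc*x) := by field_simp
  have evC : x - QC * Qc⁻¹ * t1 = (Qc*x - QC*t1)/Qc := by field_simp
  have evD : x - QD * Qc⁻¹ * t2 = (Qc*x - QD*t2)/Qc := by field_simp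
  have e3c : (QI + QI') * x + (QI * (QC * QD) + QI' * (QA * QB) * (Qc⁻¹ * Qc⁻¹)) * t1 * t2 * x⁻¹
      = ((QI + QI')*(x*x)*(Qc*Qc) + QI*(QC*QD)*t1*t2*(Qc*Qc) + QI'*(QA*QB)*t1*t2) / (x*(Qc*Qc)) := by
    field_simp; ring
  have e4c : -(QI * QC * t1 + QI * QD * t2 + QI' * QA * Qc⁻¹ * t1 + QI' * QB * Qc⁻¹ * t2)
      = -(QI*QC*t1*Qc + QI*QD*t2*Qc + QI'*QA*t1 + QI'*QB*t2) / Qc := by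
    field_simp
  rw [eA1, eB1, eC1, eD1, eA2, eB2, eC2, eD2, evC, evD, e3c, e4c]
  set D : ℂ := x*x*x * (Qc*Qc) * ((x - QC*t1) * (Qc*x - QC*t1) * (x - QD*t2) * (Qc*x - QD*t2)) * (PC*PD)
    with hDdef
  have hD : D ≠ 0 := by rw [hDdef]; apply_rules [mul_ne_zero]
  have T1eq : x⁻¹ * (x - QA * t1) * (x - QB * t2) * (X * QI * (PA * PB / (PC * PD)))
      = X*QI*PA*PB * ((x - QA*t1)*(x - QB*t2)*(x - QC*t1)*(Qc*x - QC*t1)*(x - QD*t2)*(Qc*x - QD*t2))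
          * ((x*x)*(Qc*Qc)) / D := by
    rw [eq_div_iff hD, hDdef]
    simp only [inv_eq_one_div, mul_div_assoc', div_mul_eq_mul_div, div_mul_div_comm,
      div_div_eq_mul_div, div_div, one_mul, mul_one]
    rw [div_eq_iff (by apply_rules [mul_ne_zero])]
    ring
  have T2eq : QI * QI' * x⁻¹ * ((Qc*x - QC*t1)/Qc) * ((Qc*x - QD*t2)/Qc) *
          (QI⁻¹ * X *
            ((Qc*x - QA*t1)/(Qc*x) * ((x - QA*t1)/x * PA) * ((Qc*x - QB*t2)/(Qc*x) * ((x - QB*t2)/x * PB)) /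
              ((Qc*x - QC*t1)/(Qc*x) * ((x - QC*t1)/x * PC) *
                ((Qc*x - QD*t2)/(Qc*x) * ((x - QD*t2)/x * PD)))))
      = X*QI'*PA*PB * ((Qc*x - QA*t1)*(x - QA*t1)*(Qc*x - QB*t2)*(x - QB*t2)*(Qc*x - QC*t1)*(Qc*x - QD*t2))
          * (x*x) / D := by
    rw [eq_div_iff hD, hDdef]
    simp only [inv_eq_one_div, mul_div_assoc', div_mul_eq_mul_div, div_mul_div_comm,
      div_div_eq_mul_div, div_div, one_mul, mul_one]
    rw [div_eq_iff (by apply_rules [mul_ne_zero])]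
    ring
  have T3eq : (((QI + QI')*(x*x)*(Qc*Qc) + QI*(QC*QD)*t1*t2*(Qc*Qc) + QI'*(QA*QB)*t1*t2) / (x*(Qc*Qc))) *
        (X * ((x - QA*t1)/x * PA * ((x - QB*t2)/x * PB) / ((x - QC*t1)/x * PC * ((x - QD*t2)/x * PD))))
      = ((QI + QI')*(x*x)*(Qc*Qc) + QI*(QC*QD)*t1*t2*(Qc*Qc) + QI'*(QA*QB)*t1*t2) *
          (X*PA*PB*((x - QA*t1)*(x - QB*t2)*(Qc*x - QC*t1)*(Qc*x - QD*t2))) * (x*x) / D := by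
    rw [eq_div_iff hD, hDdef]
    simp only [inv_eq_one_div, mul_div_assoc', div_mul_eq_mul_div, div_mul_div_comm,
      div_div_eq_mul_div, div_div, one_mul, mul_one]
    rw [div_eq_iff (by apply_rules [mul_ne_zero])]
    ring
  have T4eq : (-(QI*QC*t1*Qc + QI*QD*t2*Qc + QI'*QA*t1 + QI'*QB*t2) / Qc) *
      (X * ((x - QA*t1)/x * PA * ((x - QB*t2)/x * PB) / ((x - QC*t1)/x * PC * ((x - QD*t2)/x * PD))))
      = -(QI*QC*t1*Qc + QI*QD*t2*Qc + QI'*QA*t1 + QI'*QB*t2) *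
          (X*PA*PB*((x - QA*t1)*(x - QB*t2)*(Qc*x - QC*t1)*(Qc*x - QD*t2))) * ((x*x)*(x*Qc)) / D := by
    rw [eq_div_iff hD, hDdef]
    simp only [inv_eq_one_div, mul_div_assoc', div_mul_eq_mul_div, div_mul_div_comm,
      div_div_eq_mul_div, div_div, one_mul, mul_one]
    rw [div_eq_iff (by apply_rules [mul_ne_zero])]
    ring
  rw [T1eq, T2eq, T3eq, T4eq, ← add_div, div_sub_div_same]
  exact congrArg (fun z => z / D) (by ring)

lemma absB (x Qc QI QI' RA RB RC RD t1 t2 X PA PB PC PD : ℂ)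
    (hx : x ≠ 0) (hQc : Qc ≠ 0) (hQI : QI ≠ 0) (ht1 : t1 ≠ 0) (ht2 : t2 ≠ 0)
    (hRA : RA ≠ 0) (hRB : RB ≠ 0) (hRC : RC ≠ 0) (hRD : RD ≠ 0)
    (hPA : PA ≠ 0) (hPB : PB ≠ 0)
    (hwA : RA*t1 - x ≠ 0) (hvA : Qc*(RA*t1) - x ≠ 0)
    (hwB : RB*t2 - x ≠ 0) (hvB : Qc*(RB*t2) - x ≠ 0) :
    x⁻¹ * (x - RA * Qc * t1) * (x - RB * Qc * t2) *
      (X * (QI * (RC * RD) / (RA * RB)) *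
        ((1 - x / (RC * t1) / Qc) * ((1 - x / (RC * t1)) * PC) *
            ((1 - x / (RD * t2) / Qc) * ((1 - x / (RD * t2)) * PD)) /
          ((1 - x / (RA * t1) / Qc) * ((1 - x / (RA * t1)) * PA) *
            ((1 - x / (RB * t2) / Qc) * ((1 - x / (RB * t2)) * PB))))) +
    QI * QI' * x⁻¹ * (x - RC * t1) * (x - RD * t2) * (RA * RB / (QI * (RC * RD)) * X * (PC * PD / (PA * PB))) -
    ((QI + QI') * x + (QI * (RC * RD) * (Qc * Qc) + QI' * (RA * RB)) * t1 * t2 * x⁻¹) *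
      (X * ((1 - x / (RC * t1)) * PC * ((1 - x / (RD * t2)) * PD) /
            ((1 - x / (RA * t1)) * PA * ((1 - x / (RB * t2)) * PB))))
    = -(QI * RC * Qc * t1 + QI * RD * Qc * t2 + QI' * RA * t1 + QI' * RB * t2) *
      (X * ((1 - x / (RC * t1)) * PC * ((1 - x / (RD * t2)) * PD) /
            ((1 - x / (RA * t1)) * PA * ((1 - x / (RB * t2)) * PB)))) := by
  have haA : RA * t1 ≠ 0 := mul_ne_zero hRA ht1
  have haB : RB * t2 ≠ 0 := mul_ne_zero hRB ht2
  have haC : RC * t1 ≠ 0 := mul_ne_zero hRC ht1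
  have haD : RD * t2 ≠ 0 := mul_ne_zero hRD ht2
  have eA1 : (1:ℂ) - x / (RA * t1) = (RA*t1 - x)/(RA*t1) := by field_simp
  have eB1 : (1:ℂ) - x / (RB * t2) = (RB*t2 - x)/(RB*t2) := by field_simp
  have eC1 : (1:ℂ) - x / (RC * t1) = (RC*t1 - x)/(RC*t1) := by field_simp
  have eD1 : (1:ℂ) - x / (RD * t2) = (RD*t2 - x)/(RD*t2) := by field_simp
  have eA2 : (1:ℂ) - x / (RA * t1) / Qc = (Qc*(RA*t1) - x)/(Qc*(RA*t1)) := by field_simp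
  have eB2 : (1:ℂ) - x / (RB * t2) / Qc = (Qc*(RB*t2) - x)/(Qc*(RB*t2)) := by field_simp
  have eC2 : (1:ℂ) - x / (RC * t1) / Qc = (Qc*(RC*t1) - x)/(Qc*(RC*t1)) := by field_simp
  have eD2 : (1:ℂ) - x / (RD * t2) / Qc = (Qc*(RD*t2) - x)/(Qc*(RD*t2)) := by field_simp
  have e3c : (QI + QI') * x + (QI * (RC * RD) * (Qc * Qc) + QI' * (RA * RB)) * t1 * t2 * x⁻¹
      = ((QI + QI')*(x*x) + (QI*(RC*RD)*(Qc*Qc) + QI'*(RA*RB))*t1*t2) / x := by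
    field_simp
  rw [eA1, eB1, eC1, eD1, eA2, eB2, eC2, eD2, e3c]
  set D : ℂ := x * (Qc*Qc) * QI * (RC*RD) * ((RA*t1 - x) * (Qc*(RA*t1) - x) * (RB*t2 - x) * (Qc*(RB*t2) - x))
    * (PA*PB) with hDdef
  have hD : D ≠ 0 := by rw [hDdef]; apply_rules [mul_ne_zero]
  have T1eq : x⁻¹ * (x - RA * Qc * t1) * (x - RB * Qc * t2) *
      (X * (QI * (RC * RD) / (RA * RB)) *
        ((Qc*(RC*t1) - x)/(Qc*(RC*t1)) * ((RC*t1 - x)/(RC*t1) * PC) *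
            ((Qc*(RD*t2) - x)/(Qc*(RD*t2)) * ((RD*t2 - x)/(RD*t2) * PD)) /
          ((Qc*(RA*t1) - x)/(Qc*(RA*t1)) * ((RA*t1 - x)/(RA*t1) * PA) *
            ((Qc*(RB*t2) - x)/(Qc*(RB*t2)) * ((RB*t2 - x)/(RB*t2) * PB)))))
      = X*(QI*QI)*(Qc*Qc)*RA*RB*PC*PD *
          ((Qc*(RA*t1) - x)*(Qc*(RB*t2) - x)*(Qc*(RC*t1) - x)*(Qc*(RD*t2) - x)*(RC*t1 - x)*(RD*t2 - x)) / D := by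
    rw [eq_div_iff hD, hDdef]
    simp only [inv_eq_one_div, mul_div_assoc', div_mul_eq_mul_div, div_mul_div_comm,
      div_div_eq_mul_div, div_div, one_mul, mul_one]
    rw [div_eq_iff (by apply_rules [mul_ne_zero])]
    ring
  have T2eq : QI * QI' * x⁻¹ * (x - RC * t1) * (x - RD * t2) *
        (RA * RB / (QI * (RC * RD)) * X * (PC * PD / (PA * PB)))
      = X*(QI*QI')*(Qc*Qc)*RA*RB*PC*PD *
          ((RC*t1 - x)*(RD*t2 - x)*((RA*t1 - x)*(Qc*(RA*t1) - x)*(RB*t2 - x)*(Qc*(RB*t2) - x))) / D := by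
    rw [eq_div_iff hD, hDdef]
    simp only [inv_eq_one_div, mul_div_assoc', div_mul_eq_mul_div, div_mul_div_comm,
      div_div_eq_mul_div, div_div, one_mul, mul_one]
    rw [div_eq_iff (by apply_rules [mul_ne_zero])]
    ring
  have T3eq : (((QI + QI')*(x*x) + (QI*(RC*RD)*(Qc*Qc) + QI'*(RA*RB))*t1*t2) / x) *
      (X * ((RC*t1 - x)/(RC*t1) * PC * ((RD*t2 - x)/(RD*t2) * PD) /
            ((RA*t1 - x)/(RA*t1) * PA * ((RB*t2 - x)/(RB*t2) * PB))))
      = ((QI + QI')*(x*x) + (QI*(RC*RD)*(Qc*Qc) + QI'*(RA*RB))*t1*t2) *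
          (X*QI*(Qc*Qc)*RA*RB*PC*PD*((RC*t1 - x)*(RD*t2 - x)*((Qc*(RA*t1) - x)*(Qc*(RB*t2) - x)))) / D := by
    rw [eq_div_iff hD, hDdef]
    simp only [inv_eq_one_div, mul_div_assoc', div_mul_eq_mul_div, div_mul_div_comm,
      div_div_eq_mul_div, div_div, one_mul, mul_one]
    rw [div_eq_iff (by apply_rules [mul_ne_zero])]
    ring
  have T4eq : -(QI * RC * Qc * t1 + QI * RD * Qc * t2 + QI' * RA * t1 + QI' * RB * t2) *
      (X * ((RC*t1 - x)/(RC*t1) * PC * ((RD*t2 - x)/(RD*t2) * PD) /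
            ((RA*t1 - x)/(RA*t1) * PA * ((RB*t2 - x)/(RB*t2) * PB))))
      = -(QI * RC * Qc * t1 + QI * RD * Qc * t2 + QI' * RA * t1 + QI' * RB * t2) *
          (x * (X*QI*(Qc*Qc)*RA*RB*PC*PD*((RC*t1 - x)*(RD*t2 - x)*((Qc*(RA*t1) - x)*(Qc*(RB*t2) - x))))) / D := by
    rw [eq_div_iff hD, hDdef]
    simp only [inv_eq_one_div, mul_div_assoc', div_mul_eq_mul_div, div_mul_div_comm,
      div_div_eq_mul_div, div_div, one_mul, mul_one]
    rw [div_eq_iff (by apply_rules [mul_ne_zero])]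
    ring
  rw [T1eq, T2eq, T3eq, T4eq, ← add_div, div_sub_div_same]
  exact congrArg (fun z => z / D) (by ring)

set_option maxHeartbeats 4000000 in
theorem stmt19 (q : ℝ) (hq0 : 0 < q) (hq1 : q < 1)
    (h1 h2 l1 l2 a1 a2 b : ℝ) (t1 t2 : ℂ) (ht1 : t1 ≠ 0) (ht2 : t2 ≠ 0)
    (ai ai' : ℝ) (hii : (ai = a1 ∧ ai' = a2) ∨ (ai = a2 ∧ ai' = a1))
    (hb : b = -h1 - h2 + l1 + l2 + ai - ai' + 2 ∨ b = -(-h1 - h2 + l1 + l2 + ai - ai' + 2))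
    (E0 : ℂ)
    (hE0 : E0 = -(qpow q (ai + l1 + 1/2) * t1 + qpow q (ai + l2 + 1/2) * t2
      + qpow q (ai' + h1 - 1/2) * t1 + qpow q (ai' + h2 - 1/2) * t2)) :
    (∀ x : ℂ, x ≠ 0 →
      (∀ n : ℤ, x ≠ qpow q (l1 + n - 1/2) * t1) →
      (∀ n : ℤ, x ≠ qpow q (l2 + n - 1/2) * t2) →
      A4 q t1 t2 h1 h2 l1 l2 a1 a2 b
        (fun y => y ^ ((-ai : ℝ) : ℂ) *
          (qPochInf q (qpow q (h1 + 1/2) * t1 / y) * qPochInf q (qpow q (h2 + 1/2) * t2 / y) /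
            (qPochInf q (qpow q (l1 + 1/2) * t1 / y) *
              qPochInf q (qpow q (l2 + 1/2) * t2 / y)))) x
        = E0 * (x ^ ((-ai : ℝ) : ℂ) *
            (qPochInf q (qpow q (h1 + 1/2) * t1 / x) * qPochInf q (qpow q (h2 + 1/2) * t2 / x) /
              (qPochInf q (qpow q (l1 + 1/2) * t1 / x) *
                qPochInf q (qpow q (l2 + 1/2) * t2 / x))))) ∧
    (∀ x : ℂ, x ≠ 0 →
      (∀ n : ℤ, x ≠ qpow q (h1 + n - 1/2) * t1) →
      (∀ n : ℤ, x ≠ qpow q (h2 + n - 1/2) * t2) →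
      A4 q t1 t2 h1 h2 l1 l2 a1 a2 b
        (fun y => y ^ ((-ai + h1 + h2 - l1 - l2 : ℝ) : ℂ) *
          (qPochInf q (y / (qpow q (l1 - 1/2) * t1)) * qPochInf q (y / (qpow q (l2 - 1/2) * t2)) /
            (qPochInf q (y / (qpow q (h1 - 1/2) * t1)) *
              qPochInf q (y / (qpow q (h2 - 1/2) * t2))))) x
        = E0 * (x ^ ((-ai + h1 + h2 - l1 - l2 : ℝ) : ℂ) *
            (qPochInf q (x / (qpow q (l1 - 1/2) * t1)) *
              qPochInf q (x / (qpow q (l2 - 1/2) * t2)) /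
              (qPochInf q (x / (qpow q (h1 - 1/2) * t1)) *
                qPochInf q (x / (qpow q (h2 - 1/2) * t2)))))) := by
  have hq' : (q:ℂ) ≠ 0 := by exact_mod_cast hq0.ne'
  have haa : a1 + a2 = ai + ai' := by
    rcases hii with ⟨h, h'⟩ | ⟨h, h'⟩ <;> rw [h, h'] <;> ring
  have Ri : qpow q (a1 + a2) = qpow q ai * qpow q ai' := by rw [haa, qpow_add hq0]
  have Rii : qpow q a1 + qpow q a2 = qpow q ai + qpow q ai' := by
    rcases hii with ⟨h, h'⟩ | ⟨h, h'⟩ <;> rw [h, h'] <;> ring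
  have key : qpow q ((h1+h2+l1+l2+a1+a2)/2) * (qpow q (b/2) + qpow q (-(b/2)))
      = qpow q (ai+l1+l2+1) + qpow q (ai'+h1+h2-1) := by
    rw [mul_add, ← qpow_add hq0 ((h1+h2+l1+l2+a1+a2)/2) (b/2),
      ← qpow_add hq0 ((h1+h2+l1+l2+a1+a2)/2) (-(b/2))]
    rcases hb with hb | hb
    · rw [show (h1+h2+l1+l2+a1+a2)/2 + b/2 = ai+l1+l2+1 by rw [hb]; linarith,
        show (h1+h2+l1+l2+a1+a2)/2 + -(b/2) = ai'+h1+h2-1 by rw [hb]; linarith]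
    · rw [show (h1+h2+l1+l2+a1+a2)/2 + b/2 = ai'+h1+h2-1 by rw [hb]; linarith,
        show (h1+h2+l1+l2+a1+a2)/2 + -(b/2) = ai+l1+l2+1 by rw [hb]; linarith, add_comm]
  constructor
  · -- part (a)
    intro x hx hL1 hL2
    have hpC := pochA_ne hq0 hq1 hx hL1 rfl
    have hpD := pochA_ne hq0 hq1 hx hL2 rfl
    have h1C : (1:ℂ) - qpow q (l1 + 1/2) * t1 / x ≠ 0 := by
      have := one_sub_ne_a hq0 hx hL1 1 rfl
      rwa [show (l1 + ((1:ℤ):ℝ) - 1/2 : ℝ) = l1 + 1/2 by push_cast; ring] at this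
    have h1D : (1:ℂ) - qpow q (l2 + 1/2) * t2 / x ≠ 0 := by
      have := one_sub_ne_a hq0 hx hL2 1 rfl
      rwa [show (l2 + ((1:ℤ):ℝ) - 1/2 : ℝ) = l2 + 1/2 by push_cast; ring] at this
    have h2C := one_sub_ne_a' hq0 hx hL1 rfl
    have h2D := one_sub_ne_a' hq0 hx hL2 rfl
    have hwC : x - qpow q (l1+1/2) * t1 ≠ 0 := by
      have h := hL1 1
      rw [show (l1 + ((1:ℤ):ℝ) - 1/2 : ℝ) = l1 + 1/2 by push_cast; ring] at h
      exact sub_ne_zero.mpr h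
    have hwD : x - qpow q (l2+1/2) * t2 ≠ 0 := by
      have h := hL2 1
      rw [show (l2 + ((1:ℤ):ℝ) - 1/2 : ℝ) = l2 + 1/2 by push_cast; ring] at h
      exact sub_ne_zero.mpr h
    have hvC : (q:ℂ) * x - qpow q (l1+1/2) * t1 ≠ 0 := by
      have h := hL1 0
      rw [show (l1 + ((0:ℤ):ℝ) - 1/2 : ℝ) = l1 - 1/2 by push_cast; ring] at h
      intro heq
      apply h
      have h2 : (q:ℂ) * x = qpow q (l1+1/2) * t1 := sub_eq_zero.mp heq
      rw [show (l1 + 1/2 : ℝ) = 1 + (l1 - 1/2) by ring, qpow_add hq0 1 (l1-1/2), qpow_one,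
        mul_assoc] at h2
      exact mul_left_cancel₀ hq' h2
    have hvD : (q:ℂ) * x - qpow q (l2+1/2) * t2 ≠ 0 := by
      have h := hL2 0
      rw [show (l2 + ((0:ℤ):ℝ) - 1/2 : ℝ) = l2 - 1/2 by push_cast; ring] at h
      intro heq
      apply h
      have h2 : (q:ℂ) * x = qpow q (l2+1/2) * t2 := sub_eq_zero.mp heq
      rw [show (l2 + 1/2 : ℝ) = 1 + (l2 - 1/2) by ring, qpow_add hq0 1 (l2-1/2), qpow_one,
        mul_assoc] at h2
      exact mul_left_cancel₀ hq' h2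
    have eSa : qpow q (ai+l1+l2+1) + qpow q (ai'+h1+h2-1)
        = qpow q ai * (qpow q (l1+1/2) * qpow q (l2+1/2))
          + qpow q ai' * (qpow q (h1+1/2) * qpow q (h2+1/2)) * ((q:ℂ)⁻¹ * (q:ℂ)⁻¹) := by
      rw [show (ai+l1+l2+1 : ℝ) = ai + ((l1+1/2) + (l2+1/2)) by ring,
        qpow_add hq0 ai ((l1+1/2) + (l2+1/2)), qpow_add hq0 (l1+1/2) (l2+1/2),
        show (ai'+h1+h2-1 : ℝ) = ai' + ((h1+1/2) + (h2+1/2)) + (-1) + (-1) by ring,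
        qpow_add hq0 (ai' + ((h1+1/2) + (h2+1/2)) + (-1)) (-1),
        qpow_add hq0 (ai' + ((h1+1/2) + (h2+1/2))) (-1),
        qpow_add hq0 ai' ((h1+1/2) + (h2+1/2)), qpow_add hq0 (h1+1/2) (h2+1/2),
        qpow_neg_one hq0]
      ring
    have eE1 : qpow q (ai + l1 + 1/2) = qpow q ai * qpow q (l1+1/2) := by
      rw [show (ai + l1 + 1/2 : ℝ) = ai + (l1+1/2) by ring, qpow_add hq0 ai (l1+1/2)]
    have eE2 : qpow q (ai + l2 + 1/2) = qpow q ai * qpow q (l2+1/2) := by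
      rw [show (ai + l2 + 1/2 : ℝ) = ai + (l2+1/2) by ring, qpow_add hq0 ai (l2+1/2)]
    have eE3 : qpow q (ai' + h1 - 1/2) = qpow q ai' * qpow q (h1+1/2) * (q:ℂ)⁻¹ := by
      rw [show (ai' + h1 - 1/2 : ℝ) = ai' + (h1+1/2) + (-1) by ring,
        qpow_add hq0 (ai' + (h1+1/2)) (-1), qpow_add hq0 ai' (h1+1/2), qpow_neg_one hq0]
    have eE4 : qpow q (ai' + h2 - 1/2) = qpow q ai' * qpow q (h2+1/2) * (q:ℂ)⁻¹ := by
      rw [show (ai' + h2 - 1/2 : ℝ) = ai' + (h2+1/2) + (-1) by ring,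
        qpow_add hq0 (ai' + (h2+1/2)) (-1), qpow_add hq0 ai' (h2+1/2), qpow_neg_one hq0]
    have eL1 : qpow q (l1 - 1/2) = qpow q (l1+1/2) * (q:ℂ)⁻¹ := by
      rw [show (l1 - 1/2 : ℝ) = (l1+1/2) + (-1) by ring, qpow_add hq0 (l1+1/2) (-1),
        qpow_neg_one hq0]
    have eL2 : qpow q (l2 - 1/2) = qpow q (l2+1/2) * (q:ℂ)⁻¹ := by
      rw [show (l2 - 1/2 : ℝ) = (l2+1/2) + (-1) by ring, qpow_add hq0 (l2+1/2) (-1),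
        qpow_neg_one hq0]
    have hcd : (x / (q:ℂ)) ^ ((-ai : ℝ):ℂ) = x ^ ((-ai : ℝ):ℂ) * qpow q ai := by
      rw [cpow_div_q hq0 hx (-ai), qpow_neg hq0, inv_inv]
    have hcm : ((q:ℂ) * x) ^ ((-ai : ℝ):ℂ) = (qpow q ai)⁻¹ * x ^ ((-ai:ℝ):ℂ) := by
      rw [cpow_q_mul hq0 hx (-ai), qpow_neg hq0]
    simp only [A4]
    rw [poch_div_a hq0 hx (qpow q (h1+1/2) * t1), poch_div_a hq0 hx (qpow q (h2+1/2) * t2),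
      poch_div_a hq0 hx (qpow q (l1+1/2) * t1), poch_div_a hq0 hx (qpow q (l2+1/2) * t2),
      poch_mul_a hq0 hq1 x (qpow q (h1+1/2) * t1), poch_mul_a hq0 hq1 x (qpow q (h2+1/2) * t2),
      poch_mul_a hq0 hq1 x (qpow q (l1+1/2) * t1), poch_mul_a hq0 hq1 x (qpow q (l2+1/2) * t2),
      qPochInf_shift hq0 hq1 (qpow q (h1+1/2) * t1 / x),
      qPochInf_shift hq0 hq1 (qpow q (h2+1/2) * t2 / x),
      qPochInf_shift hq0 hq1 (qpow q (l1+1/2) * t1 / x),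
      qPochInf_shift hq0 hq1 (qpow q (l2+1/2) * t2 / x),
      hcd, hcm, key, eSa, hE0, eE1, eE2, eE3, eE4, eL1, eL2, Ri, Rii]
    set Qc : ℂ := (q:ℂ) with hQcdef
    set QA := qpow q (h1+1/2) with hQAdef
    set QB := qpow q (h2+1/2) with hQBdef
    set QC := qpow q (l1+1/2) with hQCdef
    set QD := qpow q (l2+1/2) with hQDdef
    set QI := qpow q ai with hQIdef
    set QI' := qpow q ai' with hQI'def
    set X := x ^ ((-ai : ℝ):ℂ) with hXdef
    set PA := qPochInf q (Qc * (QA * t1 / x)) with hPAdef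
    set PB := qPochInf q (Qc * (QB * t2 / x)) with hPBdef
    set PC := qPochInf q (Qc * (QC * t1 / x)) with hPCdef
    set PD := qPochInf q (Qc * (QD * t2 / x)) with hPDdef
    have hQI : QI ≠ 0 := qpow_ne_zero hq0 ai
    clear_value Qc QA QB QC QD QI QI' X PA PB PC PD
    exact absA x Qc QI QI' QA QB QC QD t1 t2 X PA PB PC PD hx hq' hQI hpC hpD hwC hvC hwD hvD
  · -- part (b)
    intro x hx hH1 hH2
    have hpA := pochB_ne hq0 hq1 ht1 hH1 rfl
    have hpB := pochB_ne hq0 hq1 ht2 hH2 rfl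
    have h1A : (1:ℂ) - x / (qpow q (h1 - 1/2) * t1) ≠ 0 := by
      have := one_sub_ne_b hq0 ht1 hH1 0 rfl
      rwa [show (h1 + ((0:ℤ):ℝ) - 1/2 : ℝ) = h1 - 1/2 by push_cast; ring] at this
    have h1B : (1:ℂ) - x / (qpow q (h2 - 1/2) * t2) ≠ 0 := by
      have := one_sub_ne_b hq0 ht2 hH2 0 rfl
      rwa [show (h2 + ((0:ℤ):ℝ) - 1/2 : ℝ) = h2 - 1/2 by push_cast; ring] at this
    have h2A := one_sub_ne_b' hq0 ht1 hH1 rfl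
    have h2B := one_sub_ne_b' hq0 ht2 hH2 rfl
    have hwA : qpow q (h1-1/2) * t1 - x ≠ 0 := by
      have h := hH1 0
      rw [show (h1 + ((0:ℤ):ℝ) - 1/2 : ℝ) = h1 - 1/2 by push_cast; ring] at h
      exact sub_ne_zero.mpr (Ne.symm h)
    have hwB : qpow q (h2-1/2) * t2 - x ≠ 0 := by
      have h := hH2 0
      rw [show (h2 + ((0:ℤ):ℝ) - 1/2 : ℝ) = h2 - 1/2 by push_cast; ring] at h
      exact sub_ne_zero.mpr (Ne.symm h)
    have hvA : (q:ℂ) * (qpow q (h1-1/2) * t1) - x ≠ 0 := by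
      have h := hH1 1
      rw [show (h1 + ((1:ℤ):ℝ) - 1/2 : ℝ) = 1 + (h1 - 1/2) by push_cast; ring,
        qpow_add hq0 1 (h1-1/2), qpow_one, mul_assoc] at h
      exact sub_ne_zero.mpr (Ne.symm h)
    have hvB : (q:ℂ) * (qpow q (h2-1/2) * t2) - x ≠ 0 := by
      have h := hH2 1
      rw [show (h2 + ((1:ℤ):ℝ) - 1/2 : ℝ) = 1 + (h2 - 1/2) by push_cast; ring,
        qpow_add hq0 1 (h2-1/2), qpow_one, mul_assoc] at h
      exact sub_ne_zero.mpr (Ne.symm h)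
    have hrel : qpow q (-ai+h1+h2-l1-l2)
        * (qpow q ai * (qpow q (l1-1/2) * qpow q (l2-1/2)))
        = qpow q (h1-1/2) * qpow q (h2-1/2) := by
      rw [← qpow_add hq0 (l1-1/2) (l2-1/2), ← qpow_add hq0 ai ((l1-1/2) + (l2-1/2)),
        ← qpow_add hq0 (-ai+h1+h2-l1-l2) (ai + ((l1-1/2) + (l2-1/2))),
        ← qpow_add hq0 (h1-1/2) (h2-1/2)]
      congr 1
      ring
    have hcd : (x / (q:ℂ)) ^ ((-ai+h1+h2-l1-l2 : ℝ):ℂ)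
        = x ^ ((-ai+h1+h2-l1-l2 : ℝ):ℂ)
          * (qpow q ai * (qpow q (l1-1/2) * qpow q (l2-1/2))
            / (qpow q (h1-1/2) * qpow q (h2-1/2))) := by
      rw [cpow_div_q hq0 hx (-ai+h1+h2-l1-l2)]
      congr 1
      rw [eq_div_iff (mul_ne_zero (qpow_ne_zero hq0 _) (qpow_ne_zero hq0 _)),
        inv_mul_eq_iff_eq_mul₀ (qpow_ne_zero hq0 _)]
      linear_combination -hrel
    have hcm : ((q:ℂ) * x) ^ ((-ai+h1+h2-l1-l2 : ℝ):ℂ)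
        = (qpow q (h1-1/2) * qpow q (h2-1/2)
            / (qpow q ai * (qpow q (l1-1/2) * qpow q (l2-1/2))))
          * x ^ ((-ai+h1+h2-l1-l2 : ℝ):ℂ) := by
      rw [cpow_q_mul hq0 hx (-ai+h1+h2-l1-l2)]
      congr 1
      rw [eq_div_iff (mul_ne_zero (qpow_ne_zero hq0 _)
        (mul_ne_zero (qpow_ne_zero hq0 _) (qpow_ne_zero hq0 _)))]
      linear_combination hrel
    have eSb : qpow q (ai+l1+l2+1) + qpow q (ai'+h1+h2-1)
        = qpow q ai * (qpow q (l1-1/2) * qpow q (l2-1/2)) * ((q:ℂ) * (q:ℂ))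
          + qpow q ai' * (qpow q (h1-1/2) * qpow q (h2-1/2)) := by
      rw [show (ai+l1+l2+1 : ℝ) = ai + ((l1-1/2) + (l2-1/2)) + 1 + 1 by ring,
        qpow_add hq0 (ai + ((l1-1/2) + (l2-1/2)) + 1) 1,
        qpow_add hq0 (ai + ((l1-1/2) + (l2-1/2))) 1,
        qpow_add hq0 ai ((l1-1/2) + (l2-1/2)), qpow_add hq0 (l1-1/2) (l2-1/2),
        show (ai'+h1+h2-1 : ℝ) = ai' + ((h1-1/2) + (h2-1/2)) by ring,
        qpow_add hq0 ai' ((h1-1/2) + (h2-1/2)), qpow_add hq0 (h1-1/2) (h2-1/2), qpow_one]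
      ring
    have eE1 : qpow q (ai + l1 + 1/2) = qpow q ai * qpow q (l1-1/2) * (q:ℂ) := by
      rw [show (ai + l1 + 1/2 : ℝ) = ai + (l1-1/2) + 1 by ring,
        qpow_add hq0 (ai + (l1-1/2)) 1, qpow_add hq0 ai (l1-1/2), qpow_one]
    have eE2 : qpow q (ai + l2 + 1/2) = qpow q ai * qpow q (l2-1/2) * (q:ℂ) := by
      rw [show (ai + l2 + 1/2 : ℝ) = ai + (l2-1/2) + 1 by ring,
        qpow_add hq0 (ai + (l2-1/2)) 1, qpow_add hq0 ai (l2-1/2), qpow_one]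
    have eE3 : qpow q (ai' + h1 - 1/2) = qpow q ai' * qpow q (h1-1/2) := by
      rw [show (ai' + h1 - 1/2 : ℝ) = ai' + (h1-1/2) by ring, qpow_add hq0 ai' (h1-1/2)]
    have eE4 : qpow q (ai' + h2 - 1/2) = qpow q ai' * qpow q (h2-1/2) := by
      rw [show (ai' + h2 - 1/2 : ℝ) = ai' + (h2-1/2) by ring, qpow_add hq0 ai' (h2-1/2)]
    have eH1 : qpow q (h1 + 1/2) = qpow q (h1-1/2) * (q:ℂ) := by
      rw [show (h1 + 1/2 : ℝ) = (h1-1/2) + 1 by ring, qpow_add hq0 (h1-1/2) 1, qpow_one]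
    have eH2 : qpow q (h2 + 1/2) = qpow q (h2-1/2) * (q:ℂ) := by
      rw [show (h2 + 1/2 : ℝ) = (h2-1/2) + 1 by ring, qpow_add hq0 (h2-1/2) 1, qpow_one]
    simp only [A4]
    rw [poch_div_b hq0 hq1 x (qpow q (l1-1/2) * t1), poch_div_b hq0 hq1 x (qpow q (l2-1/2) * t2),
      poch_div_b hq0 hq1 x (qpow q (h1-1/2) * t1), poch_div_b hq0 hq1 x (qpow q (h2-1/2) * t2),
      poch_mul_b x (qpow q (l1-1/2) * t1), poch_mul_b x (qpow q (l2-1/2) * t2),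
      poch_mul_b x (qpow q (h1-1/2) * t1), poch_mul_b x (qpow q (h2-1/2) * t2),
      qPochInf_shift hq0 hq1 (x / (qpow q (l1-1/2) * t1)),
      qPochInf_shift hq0 hq1 (x / (qpow q (l2-1/2) * t2)),
      qPochInf_shift hq0 hq1 (x / (qpow q (h1-1/2) * t1)),
      qPochInf_shift hq0 hq1 (x / (qpow q (h2-1/2) * t2)),
      hcd, hcm, key, eSb, hE0, eE1, eE2, eE3, eE4, eH1, eH2, Ri, Rii]
    set Qc : ℂ := (q:ℂ) with hQcdef
    set RA := qpow q (h1-1/2) with hRAdef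
    set RB := qpow q (h2-1/2) with hRBdef
    set RC := qpow q (l1-1/2) with hRCdef
    set RD := qpow q (l2-1/2) with hRDdef
    set QI := qpow q ai with hQIdef
    set QI' := qpow q ai' with hQI'def
    set X := x ^ ((-ai+h1+h2-l1-l2 : ℝ):ℂ) with hXdef
    set PA := qPochInf q (Qc * (x / (RA * t1))) with hPAdef
    set PB := qPochInf q (Qc * (x / (RB * t2))) with hPBdef
    set PC := qPochInf q (Qc * (x / (RC * t1))) with hPCdef
    set PD := qPochInf q (Qc * (x / (RD * t2))) with hPDdef
    have hQI : QI ≠ 0 := qpow_ne_zero hq0 ai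
    have hRA : RA ≠ 0 := qpow_ne_zero hq0 _
    have hRB : RB ≠ 0 := qpow_ne_zero hq0 _
    have hRC : RC ≠ 0 := qpow_ne_zero hq0 _
    have hRD : RD ≠ 0 := qpow_ne_zero hq0 _
    clear_value Qc RA RB RC RD QI QI' X PA PB PC PD
    exact absB x Qc QI QI' RA RB RC RD t1 t2 X PA PB PC PD hx hq' hQI ht1 ht2 hRA hRB hRC hRD
      hpA hpB hwA hvA hwB hvB
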